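/- arXiv:2411.13671 — 6 statements merged into one kernel-verified Lean document; each statement's English description precedes it below -/
import Mathlib

section
/- There exists a real number p₀ with 2.57 < p₀ < 2.58 such that (1/2)·(2^{p₀} − 1)^{1/p₀} = 4^{−1/p₀}·(1 + τ_{p₀})/(1 − τ_{p₀}), where τ_{p₀} ∈ [0,1) is determined by 2(1 − τ_{p₀})^{p₀} = 1 + τ_{p₀}^{p₀}. -/
/-!
Writing `X p = (4 (2^p - 1))^{1/p} = 4^{1/p} σ_p`, the crossing condition reads
`(1 + τ)/(1 - τ) = X p / 2`, i.e. `τ = (X p - 2)/(X p + 2)`. Substituting this `τ` into the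
defining equation of `τ_p` leaves one continuous function of `p`,
`2 (1 - τ)^p - 1 - τ^p`, which is positive at `p = 2.57` and negative at `p = 2.58`;
the intermediate value theorem gives `p₀`. The two signs follow from rational bounds on `τ`,
since that expression decreases in `τ`; every bound reduces to an inequality between natural
powers of rationals.
-/

open Real Set

lemma rpow_div_natCast_pow {x : ℝ} (hx : 0 ≤ x) (m : ℕ) {n : ℕ} (hn : n ≠ 0) :
    (x ^ ((m : ℝ) / n)) ^ n = x ^ m := by
  rw [← rpow_natCast (x ^ _), ← rpow_mul hx, div_mul_cancel₀ _ (by exact_mod_cast hn),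
    rpow_natCast]

lemma rpow_div_natCast_le_iff {x c : ℝ} (hx : 0 ≤ x) (hc : 0 ≤ c) (m : ℕ) {n : ℕ}
    (hn : n ≠ 0) : x ^ ((m : ℝ) / n) ≤ c ↔ x ^ m ≤ c ^ n := by
  rw [← pow_le_pow_iff_left₀ (rpow_nonneg hx _) hc hn, rpow_div_natCast_pow hx m hn]

lemma le_rpow_div_natCast_iff {x c : ℝ} (hx : 0 ≤ x) (hc : 0 ≤ c) (m : ℕ) {n : ℕ}
    (hn : n ≠ 0) : c ≤ x ^ ((m : ℝ) / n) ↔ c ^ n ≤ x ^ m := by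
  rw [← pow_le_pow_iff_left₀ hc (rpow_nonneg hx _) hn, rpow_div_natCast_pow hx m hn]

/-- `4^{1/p} σ_p`. -/
noncomputable def crossingX (p : ℝ) : ℝ := (4 * (2 ^ p - 1)) ^ (1 / p)

/-- The value of `τ` forced by the crossing condition at `p`. -/
noncomputable def crossingTau (p : ℝ) : ℝ := (crossingX p - 2) / (crossingX p + 2)

/-- `τ_p` is the zero of `tauDefect p` in `[0, 1)`. -/
noncomputable def tauDefect (p τ : ℝ) : ℝ := 2 * (1 - τ) ^ p - 1 - τ ^ p

lemma four_mul_two_rpow_sub_one_nonneg {p : ℝ} (hp : 0 ≤ p) :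
    0 ≤ 4 * ((2 : ℝ) ^ p - 1) := by
  linarith [one_le_rpow one_le_two hp]

lemma crossingX_nonneg {p : ℝ} (hp : 0 ≤ p) : 0 ≤ crossingX p :=
  rpow_nonneg (four_mul_two_rpow_sub_one_nonneg hp) _

lemma two_le_crossingX {p : ℝ} (hp : 1 ≤ p) : 2 ≤ crossingX p := by
  have h2 : (2 : ℝ) ≤ 2 ^ p := by simpa using rpow_le_rpow_of_exponent_le one_le_two hp
  calc (2 : ℝ) = (2 ^ p) ^ (1 / p) := by
        rw [← rpow_mul zero_le_two, mul_one_div_cancel (by positivity), rpow_one]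
    _ ≤ crossingX p := rpow_le_rpow (by positivity) (by linarith) (by positivity)

lemma crossingTau_nonneg {p : ℝ} (hp : 1 ≤ p) : 0 ≤ crossingTau p := by
  have := two_le_crossingX hp
  exact div_nonneg (by linarith) (by linarith)

lemma crossingTau_lt_one {p : ℝ} (hp : 1 ≤ p) : crossingTau p < 1 := by
  have := two_le_crossingX hp
  rw [crossingTau, div_lt_one (by linarith)]
  linarith

lemma half_mul_rpow_eq_crossingTau {p : ℝ} (hp : 0 ≤ p) :
    (1 / 2) * ((2 : ℝ) ^ p - 1) ^ (1 / p) =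
      (4 : ℝ) ^ (-1 / p) * (1 + crossingTau p) / (1 - crossingTau p) := by
  have hX_eq : crossingX p = 4 ^ (1 / p) * (2 ^ p - 1) ^ (1 / p) :=
    mul_rpow (by norm_num) (by linarith [four_mul_two_rpow_sub_one_nonneg hp])
  have h4 : (4 : ℝ) ^ (-1 / p) * 4 ^ (1 / p) = 1 := by
    rw [← rpow_add (by norm_num), neg_div, neg_add_cancel, rpow_zero]
  have hratio : (1 + crossingTau p) / (1 - crossingTau p) = crossingX p / 2 := by
    have : crossingX p + 2 ≠ 0 := by linarith [crossingX_nonneg hp]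
    rw [crossingTau]
    field_simp
    ring
  rw [mul_div_assoc, hratio, hX_eq]
  linear_combination (-(2 ^ p - 1) ^ (1 / p) / 2 : ℝ) * h4

lemma continuousOn_crossingTau : ContinuousOn crossingTau (Ioi 0) := by
  intro p (hp : 0 < p)
  have hX : ContinuousAt crossingX p :=
    (continuousAt_const.mul (continuousAt_const.rpow continuousAt_id (by norm_num)
      |>.sub continuousAt_const)).rpow (continuousAt_const.div continuousAt_id hp.ne')
      (Or.inr (by positivity))
  exact ((hX.sub continuousAt_const).div (hX.add continuousAt_const)
    (by dsimp; linarith [crossingX_nonneg hp.le])).continuousWithinAt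

lemma continuousOn_tauDefect_crossingTau :
    ContinuousOn (fun p ↦ tauDefect p (crossingTau p)) (Ioi 0) := by
  intro p (hp : 0 < p)
  have hτ := (continuousOn_crossingTau p hp).continuousAt (Ioi_mem_nhds hp)
  exact (((continuousAt_const.mul ((continuousAt_const.sub hτ).rpow continuousAt_id
    (Or.inr hp))).sub continuousAt_const).sub
    (hτ.rpow continuousAt_id (Or.inr hp))).continuousWithinAt

lemma tauDefect_le_tauDefect {p τ t : ℝ} (hp : 0 ≤ p) (hτ : 0 ≤ τ) (hτt : τ ≤ t)
    (ht : t ≤ 1) : tauDefect p t ≤ tauDefect p τ := by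
  have h1 : (1 - t) ^ p ≤ (1 - τ) ^ p := rpow_le_rpow (by linarith) (by linarith) hp
  have h2 : τ ^ p ≤ t ^ p := rpow_le_rpow hτ hτt hp
  unfold tauDefect
  linarith

lemma crossingTau_le {p x : ℝ} (hp : 0 ≤ p) (hX : crossingX p ≤ x) :
    crossingTau p ≤ (x - 2) / (x + 2) := by
  have := crossingX_nonneg hp
  rw [crossingTau, div_le_div_iff₀ (by linarith) (by linarith)]
  nlinarith

lemma le_crossingTau {p x : ℝ} (hx : 0 ≤ x) (hX : x ≤ crossingX p) :
    (x - 2) / (x + 2) ≤ crossingTau p := by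
  rw [crossingTau, div_le_div_iff₀ (by linarith) (by linarith)]
  nlinarith

-- `norm_num` does not evaluate powers with exponent above 256, hence the `pow_succ` below.
lemma crossingTau_257_le : crossingTau 2.57 ≤ 459319 / 2000000 := by
  have h2 : (2 : ℝ) ^ (2.57 : ℝ) ≤ 59380943 / 10000000 := by
    rw [show (2.57 : ℝ) = (257 : ℕ) / (100 : ℕ) by norm_num,
      rpow_div_natCast_le_iff (by norm_num) (by norm_num) _ (by norm_num),
      show 257 = 256 + 1 from rfl, pow_succ _ 256]
    norm_num
  have hX : crossingX 2.57 ≤ 6385017 / 2000000 :=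
    calc crossingX 2.57
        ≤ (4 * (59380943 / 10000000 - 1) : ℝ) ^ ((100 : ℕ) / (257 : ℕ) : ℝ) := by
          rw [crossingX, show (1 : ℝ) / 2.57 = (100 : ℕ) / (257 : ℕ) by norm_num]
          exact rpow_le_rpow (four_mul_two_rpow_sub_one_nonneg (by norm_num)) (by linarith)
            (by positivity)
      _ ≤ 6385017 / 2000000 := by
          rw [rpow_div_natCast_le_iff (by norm_num) (by norm_num) _ (by norm_num),
            show 257 = 256 + 1 from rfl, pow_succ _ 256]
          norm_num
  exact (crossingTau_le (by norm_num) hX).trans (by norm_num)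

lemma le_crossingTau_258 : 1145287 / 5000000 ≤ crossingTau 2.58 := by
  have h2 : 59793969 / 10000000 ≤ (2 : ℝ) ^ (2.58 : ℝ) := by
    rw [show (2.58 : ℝ) = (129 : ℕ) / (50 : ℕ) by norm_num,
      le_rpow_div_natCast_iff (by norm_num) (by norm_num) _ (by norm_num)]
    norm_num
  have hX : 15942269 / 5000000 ≤ crossingX 2.58 :=
    calc (15942269 / 5000000 : ℝ)
        ≤ (4 * (59793969 / 10000000 - 1) : ℝ) ^ ((50 : ℕ) / (129 : ℕ) : ℝ) := by
          rw [le_rpow_div_natCast_iff (by norm_num) (by norm_num) _ (by norm_num)]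
          norm_num
      _ ≤ crossingX 2.58 := by
          rw [crossingX, show (1 : ℝ) / 2.58 = (50 : ℕ) / (129 : ℕ) by norm_num]
          exact rpow_le_rpow (by norm_num) (by linarith) (by positivity)
  exact le_trans (by norm_num) (le_crossingTau (by norm_num) hX)

lemma tauDefect_257_pos : 0 < tauDefect 2.57 (459319 / 2000000) := by
  have hp : (2.57 : ℝ) = (257 : ℕ) / (100 : ℕ) := by norm_num
  have h1 : 5114163 / 10000000 ≤ (1 - 459319 / 2000000 : ℝ) ^ (2.57 : ℝ) := by
    rw [hp, le_rpow_div_natCast_iff (by norm_num) (by norm_num) _ (by norm_num),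
      show 257 = 256 + 1 from rfl, pow_succ _ 256]
    norm_num
  have h2 : (459319 / 2000000 : ℝ) ^ (2.57 : ℝ) ≤ 57007 / 2500000 := by
    rw [hp, rpow_div_natCast_le_iff (by norm_num) (by norm_num) _ (by norm_num),
      show 257 = 256 + 1 from rfl, pow_succ _ 256]
    norm_num
  unfold tauDefect
  linarith

lemma tauDefect_258_neg : tauDefect 2.58 (1145287 / 5000000) < 0 := by
  have hp : (2.58 : ℝ) = (129 : ℕ) / (50 : ℕ) := by norm_num
  have h1 : (1 - 1145287 / 5000000 : ℝ) ^ (2.58 : ℝ) ≤ 511113 / 1000000 := by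
    rw [hp, rpow_div_natCast_le_iff (by norm_num) (by norm_num) _ (by norm_num)]
    norm_num
  have h2 : 11159 / 500000 ≤ (1145287 / 5000000 : ℝ) ^ (2.58 : ℝ) := by
    rw [hp, le_rpow_div_natCast_iff (by norm_num) (by norm_num) _ (by norm_num)]
    norm_num
  unfold tauDefect
  linarith

/-- there exists `p₀ ∈ (2.57, 2.58)` with
`(1/2)(2^p₀ - 1)^(1/p₀) = 4^(-1/p₀)(1+τ_{p₀})/(1-τ_{p₀})`, where `τ_{p₀} ∈ [0,1)` is
determined by `2(1-τ_{p₀})^{p₀} = 1 + τ_{p₀}^{p₀}`. -/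
theorem stmt_5 :
    ∃ p₀ τ : ℝ, 2.57 < p₀ ∧ p₀ < 2.58 ∧ 0 ≤ τ ∧ τ < 1 ∧
      2 * (1 - τ) ^ p₀ = 1 + τ ^ p₀ ∧
      (1 / 2) * ((2 : ℝ) ^ p₀ - 1) ^ (1 / p₀) =
        (4 : ℝ) ^ (-1 / p₀) * (1 + τ) / (1 - τ) := by
  have h257 : 0 < tauDefect 2.57 (crossingTau 2.57) :=
    tauDefect_257_pos.trans_le (tauDefect_le_tauDefect (by norm_num)
      (crossingTau_nonneg (by norm_num)) crossingTau_257_le (by norm_num))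
  have h258 : tauDefect 2.58 (crossingTau 2.58) < 0 :=
    (tauDefect_le_tauDefect (by norm_num) (by norm_num) le_crossingTau_258
      (crossingTau_lt_one (by norm_num)).le).trans_lt tauDefect_258_neg
  obtain ⟨p₀, ⟨h₁, h₂⟩, hzero⟩ := intermediate_value_Ioo' (by norm_num)
    (continuousOn_tauDefect_crossingTau.mono fun _ hp ↦
      (by norm_num : (0 : ℝ) < 2.57).trans_le hp.1)
    ⟨h258, h257⟩
  have hp : 1 ≤ p₀ := by linarith
  refine ⟨p₀, crossingTau p₀, h₁, h₂, crossingTau_nonneg hp, crossingTau_lt_one hp, ?_,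
    half_mul_rpow_eq_crossingTau (by linarith)⟩
  unfold tauDefect at hzero
  linarith
end

section
/- Let p > 1 and σ_p = (2^p − 1)^{1/p}. The lattice Λ_p^{(0)} ⊆ ℝ² spanned over ℤ by the vectors (1, 0) and (1/2, σ_p/2) is admissible for D_p (it contains no nonzero point with |x|^p + |y|^p < 1), and its covolume equals σ_p/2. -/
open scoped Pointwise

/-- The open Minkowski ball `D_p = {(x,y) : |x|^p + |y|^p < 1}` in `ℝ²`. -/
def ballD (p : ℝ) : Set (ℝ × ℝ) :=
  {v : ℝ × ℝ | |v.1| ^ p + |v.2| ^ p < 1}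

/-- The Minkowski curve `C_p = {(x,y) : |x|^p + |y|^p = 1}`, the boundary of `D_p`. -/
def curveC (p : ℝ) : Set (ℝ × ℝ) :=
  {v : ℝ × ℝ | |v.1| ^ p + |v.2| ^ p = 1}

/-- The lattice (ℤ-span) generated by two vectors `a b : ℝ²`. -/
def latticeSet (a b : ℝ × ℝ) : Set (ℝ × ℝ) :=
  {v : ℝ × ℝ | ∃ m n : ℤ, v = (m : ℝ) • a + (n : ℝ) • b}

/-- The determinant of the 2×2 matrix with rows `a` and `b`. -/
def det2 (a b : ℝ × ℝ) : ℝ := a.1 * b.2 - a.2 * b.1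

/-- A lattice with basis `a, b` is admissible for `D` if it meets `D` at most in `0`. -/
def IsAdmissible (D : Set (ℝ × ℝ)) (a b : ℝ × ℝ) : Prop :=
  latticeSet a b ∩ D ⊆ {0}

/-- The critical determinant `Δ(D)`: the infimum of covolumes `|det(a,b)|` over all
full-rank lattices `ℤa + ℤb` admissible for `D` (with value `∞` if none exists). -/
noncomputable def criticalDet (D : Set (ℝ × ℝ)) : ENNReal :=
  sInf {d : ENNReal | ∃ a b : ℝ × ℝ, LinearIndependent ℝ ![a, b] ∧
    IsAdmissible D a b ∧ d = ENNReal.ofReal |det2 a b|}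

/-!
A lattice point is `m (1,0) + n (1/2, σ/2) = ((2m + n)/2, nσ/2)`, and we split on the parity of `n`.
For odd `n` both coordinates are at least `1/2` and `σ/2` in absolute value, and
`(1/2)^p + (σ/2)^p = (1 + σ^p)/2^p = 1`. For even `n ≠ 0` the second coordinate alone has
`|y| ≥ σ` and `σ^p = 2^p - 1 ≥ 1` because `p ≥ 1`. For `n = 0` the point is `(m, 0)`.
-/

open Real

theorem one_le_abs_intCast {k : ℤ} (hk : k ≠ 0) : (1 : ℝ) ≤ |(k : ℝ)| := by
  exact_mod_cast Int.one_le_abs hk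

section MinkowskiBall

variable {p : ℝ}

theorem notMem_ballD_of_le_abs (hp : 0 ≤ p) {a b x y : ℝ} (ha : 0 ≤ a) (hb : 0 ≤ b)
    (hx : a ≤ |x|) (hy : b ≤ |y|) (h : 1 ≤ a ^ p + b ^ p) : (x, y) ∉ ballD p := by
  simp only [ballD, Set.mem_ofPred_eq, not_lt]
  calc 1 ≤ a ^ p + b ^ p := h
    _ ≤ |x| ^ p + |y| ^ p := add_le_add (rpow_le_rpow ha hx hp) (rpow_le_rpow hb hy hp)

theorem half_rpow_add_half_rpow_eq_one {σ : ℝ} (hσ0 : 0 ≤ σ)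
    (hσp : σ ^ p = 2 ^ p - 1) : (1 / 2 : ℝ) ^ p + (σ / 2) ^ p = 1 := by
  have h2p : (0 : ℝ) < 2 ^ p := rpow_pos_of_pos (by norm_num) p
  rw [div_rpow zero_le_one zero_le_two, div_rpow hσ0 zero_le_two, one_rpow, hσp]
  field_simp
  ring

theorem smul_one_zero_add_smul_half_half (σ : ℝ) (m n : ℤ) :
    (m : ℝ) • ((1 : ℝ), (0 : ℝ)) + (n : ℝ) • ((1 / 2 : ℝ), σ / 2) =
      (((2 * m + n : ℤ) : ℝ) / 2, n * σ / 2) := by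
  ext <;> simp <;> ring

theorem isAdmissible_ballD_one_zero_half_half (hp : 1 ≤ p) {σ : ℝ} (hσ0 : 0 ≤ σ)
    (hσp : σ ^ p = 2 ^ p - 1) : IsAdmissible (ballD p) (1, 0) (1 / 2, σ / 2) := by
  have hp0 : 0 < p := zero_lt_one.trans_le hp
  rintro v ⟨⟨m, n, rfl⟩, hD⟩
  rw [smul_one_zero_add_smul_half_half] at hD ⊢
  rcases Int.even_or_odd' n with ⟨k, rfl | rfl⟩
  · rcases eq_or_ne k 0 with rfl | hk
    · rcases eq_or_ne m 0 with rfl | hm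
      · simp
      refine absurd hD (notMem_ballD_of_le_abs hp0.le zero_le_one le_rfl ?_ (abs_nonneg _) ?_)
      · simpa using one_le_abs_intCast hm
      · simp [zero_rpow hp0.ne']
    refine absurd hD (notMem_ballD_of_le_abs hp0.le le_rfl hσ0 (abs_nonneg _) ?_ ?_)
    · have hk' := one_le_abs_intCast hk
      rw [show ((2 * k : ℤ) : ℝ) * σ / 2 = k * σ by push_cast; ring, abs_mul, abs_of_nonneg hσ0]
      nlinarith
    · have h2p : (2 : ℝ) ≤ 2 ^ p := by simpa using rpow_le_rpow_of_exponent_le one_le_two hp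
      rw [zero_rpow hp0.ne', hσp]
      linarith
  · refine absurd hD (notMem_ballD_of_le_abs hp0.le (by norm_num) (by positivity) ?_ ?_
      (half_rpow_add_half_rpow_eq_one hσ0 hσp).ge)
    · have h := one_le_abs_intCast (show 2 * m + (2 * k + 1) ≠ 0 by omega)
      rw [abs_div, abs_two]
      linarith
    · have hk := one_le_abs_intCast (show 2 * k + 1 ≠ 0 by omega)
      rw [mul_div_assoc, abs_mul, abs_of_nonneg (by positivity : 0 ≤ σ / 2)]
      nlinarith

end MinkowskiBall

/-- for `p > 1` and `σ_p = (2^p-1)^(1/p)`, the lattice spanned over ℤ by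
`(1,0)` and `(1/2, σ_p/2)` is admissible for `D_p` and has covolume `σ_p/2`. -/
theorem stmt_6 (p : ℝ) (hp : 1 < p) (σ : ℝ) (hσ : σ = ((2 : ℝ) ^ p - 1) ^ (1 / p)) :
    IsAdmissible (ballD p) (1, 0) (1 / 2, σ / 2) ∧
      |det2 (1, 0) (1 / 2, σ / 2)| = σ / 2 := by
  have hp0 : 0 < p := zero_lt_one.trans hp
  have hbase : (0 : ℝ) ≤ 2 ^ p - 1 := by linarith [one_le_rpow one_le_two hp0.le]
  have hσ0 : 0 ≤ σ := hσ ▸ rpow_nonneg hbase _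
  have hσp : σ ^ p = 2 ^ p - 1 := by rw [hσ, one_div, rpow_inv_rpow hbase hp0.ne']
  refine ⟨isAdmissible_ballD_one_zero_half_half hp.le hσ0 hσp, ?_⟩
  rw [det2, abs_of_nonneg (by linarith)]
  ring
end

section
/- Let p > 1 and σ_p = (2^p − 1)^{1/p}, and let Λ_p^{(0)} ⊆ ℝ² be the lattice spanned over ℤ by (1, 0) and (1/2, σ_p/2). Then the set of points of Λ_p^{(0)} lying on the Minkowski curve |x|^p + |y|^p = 1 is exactly the six points ±(1, 0), (1/2, σ_p/2), (−1/2, −σ_p/2), (−1/2, σ_p/2), (1/2, −σ_p/2). -/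
open scoped Pointwise

/-!
A point of `Λ_p^{(0)}` has second coordinate `n σ_p / 2`, and `σ_p > 1` because `p > 1`; so on
`C_p` we must have `|n| ≤ 1`. For `n = 0` the curve forces `|x| = 1`; for `n = ±1`, since
`(σ_p / 2)^p = 1 - (1/2)^p`, it forces `|x| = 1/2`. The lattice condition on the first coordinate
is then automatic, and the six resulting points all lie in the lattice.
-/

open Real

section MinkowskiCurve

variable {p : ℝ}

lemma abs_snd_le_one_of_mem_curveC (hp : 0 < p) {v : ℝ × ℝ} (hv : v ∈ curveC p) :
    |v.2| ≤ 1 := by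
  by_contra! h
  have hv' : |v.1| ^ p + |v.2| ^ p = 1 := hv
  linarith [one_lt_rpow h hp, rpow_nonneg (abs_nonneg v.1) p]

lemma mk_mem_curveC_iff {x y c : ℝ} (hp : p ≠ 0) (hc : 0 ≤ c) (hy : |y| ^ p = 1 - c ^ p) :
    (x, y) ∈ curveC p ↔ |x| = c := by
  rw [← rpow_left_inj (abs_nonneg x) hc hp]
  change |x| ^ p + |y| ^ p = 1 ↔ _
  constructor <;> intro h <;> linarith

lemma mk_zero_mem_curveC_iff (hp : p ≠ 0) {x : ℝ} : (x, 0) ∈ curveC p ↔ |x| = 1 :=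
  mk_mem_curveC_iff hp zero_le_one (by simp [zero_rpow hp])

end MinkowskiCurve

noncomputable def minkowskiSigma (p : ℝ) : ℝ := (2 ^ p - 1) ^ (1 / p)

section MinkowskiSigma

variable {p : ℝ}

lemma one_le_two_rpow (hp : 0 ≤ p) : (1 : ℝ) ≤ 2 ^ p := one_le_rpow one_le_two hp

lemma minkowskiSigma_nonneg (hp : 0 ≤ p) : 0 ≤ minkowskiSigma p :=
  rpow_nonneg (by linarith [one_le_two_rpow hp]) _

lemma minkowskiSigma_rpow (hp : 0 < p) : minkowskiSigma p ^ p = 2 ^ p - 1 := by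
  rw [minkowskiSigma, one_div, rpow_inv_rpow (by linarith [one_le_two_rpow hp.le]) hp.ne']

lemma one_lt_minkowskiSigma (hp : 1 < p) : 1 < minkowskiSigma p := by
  have hp0 : 0 < p := zero_lt_one.trans hp
  rw [← rpow_lt_rpow_iff zero_le_one (minkowskiSigma_nonneg hp0.le) hp0, one_rpow,
    minkowskiSigma_rpow hp0]
  linarith [rpow_lt_rpow_of_exponent_lt one_lt_two hp, rpow_one (2 : ℝ)]

lemma half_minkowskiSigma_rpow (hp : 0 < p) :
    (minkowskiSigma p / 2) ^ p = 1 - (1 / 2) ^ p := by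
  rw [div_rpow (minkowskiSigma_nonneg hp.le) zero_le_two, minkowskiSigma_rpow hp,
    div_rpow zero_le_one zero_le_two, one_rpow]
  field_simp [(zero_lt_one.trans_le (one_le_two_rpow hp.le)).ne']

lemma mk_mem_curveC_iff_of_abs_eq_half_minkowskiSigma (hp : 0 < p) {x y : ℝ}
    (hy : |y| = minkowskiSigma p / 2) : (x, y) ∈ curveC p ↔ |x| = 1 / 2 :=
  mk_mem_curveC_iff hp.ne' (by norm_num) (hy ▸ half_minkowskiSigma_rpow hp)

end MinkowskiSigma

lemma exists_snd_eq_of_mem_latticeSet {a b v : ℝ × ℝ} (ha : a.2 = 0)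
    (hv : v ∈ latticeSet a b) : ∃ n : ℤ, v.2 = n * b.2 := by
  obtain ⟨m, n, rfl⟩ := hv
  exact ⟨n, by simp [ha]⟩

lemma int_eq_neg_one_or_zero_or_one_of_abs_mul_le {n : ℤ} {c : ℝ} (hc : 1 / 2 < c)
    (h : |n * c| ≤ 1) : n = -1 ∨ n = 0 ∨ n = 1 := by
  have : |(n : ℝ)| < 2 := by
    rw [abs_mul, abs_of_pos (by linarith : 0 < c)] at h
    nlinarith [abs_nonneg (n : ℝ)]
  have : |n| < 2 := by exact_mod_cast this
  rw [abs_lt] at this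
  omega

lemma snd_eq_zero_or_abs_eq_of_mem_latticeSet_inter_curveC {p : ℝ} (hp : 1 < p) {v : ℝ × ℝ}
    (hv : v ∈ latticeSet (1, 0) (1 / 2, minkowskiSigma p / 2) ∩ curveC p) :
    v.2 = 0 ∨ |v.2| = minkowskiSigma p / 2 := by
  obtain ⟨n, hy⟩ := exists_snd_eq_of_mem_latticeSet rfl hv.1
  have hσ := one_lt_minkowskiSigma hp
  have hσ0 : |minkowskiSigma p| = minkowskiSigma p := abs_of_pos (by linarith)
  rcases int_eq_neg_one_or_zero_or_one_of_abs_mul_le (by linarith)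
      (hy ▸ abs_snd_le_one_of_mem_curveC (zero_lt_one.trans hp) hv.2) with rfl | rfl | rfl <;>
    simp [hy, abs_div, hσ0]

/-- for `p > 1` and `σ = σ_p = (2^p-1)^(1/p)`, the points of the lattice
`Λ_p^{(0)} = ℤ(1,0) + ℤ(1/2, σ/2)` lying on the Minkowski curve `|x|^p + |y|^p = 1` are
exactly the six points `±(1,0), (1/2, σ/2), (-1/2, -σ/2), (-1/2, σ/2), (1/2, -σ/2)`. -/
theorem stmt_7 (p : ℝ) (hp : 1 < p) (σ : ℝ) (hσ : σ = ((2 : ℝ) ^ p - 1) ^ (1 / p)) :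
    latticeSet (1, 0) (1 / 2, σ / 2) ∩ curveC p =
      {((1 : ℝ), (0 : ℝ)), (-1, 0), (1 / 2, σ / 2), (-1 / 2, -σ / 2),
        (-1 / 2, σ / 2), (1 / 2, -σ / 2)} := by
  obtain rfl : σ = minkowskiSigma p := hσ
  have hp0 : 0 < p := zero_lt_one.trans hp
  have hσ0 : |minkowskiSigma p / 2| = minkowskiSigma p / 2 :=
    abs_of_pos (by linarith [one_lt_minkowskiSigma hp])
  have on_axis {x : ℝ} : (x, 0) ∈ curveC p ↔ |x| = 1 := mk_zero_mem_curveC_iff hp0.ne'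
  have off_axis {x y : ℝ} (hy : |y| = minkowskiSigma p / 2) : (x, y) ∈ curveC p ↔ |x| = 1 / 2 :=
    mk_mem_curveC_iff_of_abs_eq_half_minkowskiSigma hp0 hy
  ext ⟨x, y⟩
  simp only [Set.mem_insert_iff, Set.mem_singleton_iff, Prod.mk.injEq]
  constructor
  · intro hv
    rcases snd_eq_zero_or_abs_eq_of_mem_latticeSet_inter_curveC hp hv with rfl | hy
    · rcases abs_eq zero_le_one |>.1 (on_axis.1 hv.2) with rfl | rfl <;> norm_num
    · rcases abs_eq (by norm_num) |>.1 ((off_axis hy).1 hv.2) with rfl | rfl <;>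
        rcases abs_eq (hy ▸ abs_nonneg y) |>.1 hy with rfl | rfl <;> norm_num [neg_div]
  · have hσ0' : |-minkowskiSigma p / 2| = minkowskiSigma p / 2 := by rw [neg_div, abs_neg, hσ0]
    rintro (⟨rfl, rfl⟩ | ⟨rfl, rfl⟩ | ⟨rfl, rfl⟩ | ⟨rfl, rfl⟩ | ⟨rfl, rfl⟩ | ⟨rfl, rfl⟩)
    · exact ⟨⟨1, 0, by simp⟩, on_axis.2 (by simp)⟩
    · exact ⟨⟨-1, 0, by simp⟩, on_axis.2 (by simp)⟩
    · exact ⟨⟨0, 1, by simp⟩, (off_axis hσ0).2 (by norm_num)⟩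
    · exact ⟨⟨0, -1, by simp [neg_div]⟩, (off_axis hσ0').2 (by norm_num)⟩
    · exact ⟨⟨-1, 1, by norm_num⟩, (off_axis hσ0).2 (by norm_num)⟩
    · exact ⟨⟨1, -1, by norm_num [neg_div]⟩, (off_axis hσ0').2 (by norm_num)⟩
end

section
/- Let Λ_2^{(1)} ⊆ ℝ² be the lattice spanned over ℤ by λ¹ = (−√2/2, √2/2) and λ² = ((√6 − √2)/4, (√6 + √2)/4). Then the set of points of Λ_2^{(1)} on the unit circle x² + y² = 1 is exactly the six points (−√2/2, √2/2), (√2/2, −√2/2), ±((√6 + √2)/4, (√6 − √2)/4), and ±((√6 − √2)/4, (√6 + √2)/4). -/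
open scoped Pointwise

/-- the points of the lattice `Λ_2^{(1)}` spanned over ℤ by
`λ¹ = (-√2/2, √2/2)` and `λ² = ((√6-√2)/4, (√6+√2)/4)` lying on the unit circle
`x² + y² = 1` are exactly the six listed points. -/
theorem stmt_9 :
    latticeSet (-Real.sqrt 2 / 2, Real.sqrt 2 / 2)
        ((Real.sqrt 6 - Real.sqrt 2) / 4, (Real.sqrt 6 + Real.sqrt 2) / 4) ∩
      {v : ℝ × ℝ | v.1 ^ 2 + v.2 ^ 2 = 1} =
    {(-Real.sqrt 2 / 2, Real.sqrt 2 / 2), (Real.sqrt 2 / 2, -Real.sqrt 2 / 2),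
      ((Real.sqrt 6 + Real.sqrt 2) / 4, (Real.sqrt 6 - Real.sqrt 2) / 4),
      (-((Real.sqrt 6 + Real.sqrt 2) / 4), -((Real.sqrt 6 - Real.sqrt 2) / 4)),
      ((Real.sqrt 6 - Real.sqrt 2) / 4, (Real.sqrt 6 + Real.sqrt 2) / 4),
      (-((Real.sqrt 6 - Real.sqrt 2) / 4), -((Real.sqrt 6 + Real.sqrt 2) / 4))} := by
  have h2 : Real.sqrt 2 ^ 2 = 2 := Real.sq_sqrt (by norm_num)
  have h6 : Real.sqrt 6 ^ 2 = 6 := Real.sq_sqrt (by norm_num)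
  have c1 : (-Real.sqrt 2 / 2) ^ 2 + (Real.sqrt 2 / 2) ^ 2 = 1 := by linear_combination h2 / 2
  have c2 : (Real.sqrt 2 / 2) ^ 2 + (-Real.sqrt 2 / 2) ^ 2 = 1 := by linear_combination h2 / 2
  have c3 : ((Real.sqrt 6 + Real.sqrt 2) / 4) ^ 2 + ((Real.sqrt 6 - Real.sqrt 2) / 4) ^ 2 = 1 := by
    linear_combination h2 / 8 + h6 / 8
  have c4 : (-((Real.sqrt 6 + Real.sqrt 2) / 4)) ^ 2 + (-((Real.sqrt 6 - Real.sqrt 2) / 4)) ^ 2 = 1 := by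
    linear_combination h2 / 8 + h6 / 8
  have c5 : ((Real.sqrt 6 - Real.sqrt 2) / 4) ^ 2 + ((Real.sqrt 6 + Real.sqrt 2) / 4) ^ 2 = 1 := by
    linear_combination h2 / 8 + h6 / 8
  have c6 : (-((Real.sqrt 6 - Real.sqrt 2) / 4)) ^ 2 + (-((Real.sqrt 6 + Real.sqrt 2) / 4)) ^ 2 = 1 := by
    linear_combination h2 / 8 + h6 / 8
  ext v
  simp only [latticeSet, Set.mem_inter_iff, Set.mem_setOf_eq, Set.mem_insert_iff,
    Set.mem_singleton_iff]
  constructor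
  · rintro ⟨⟨m, n, rfl⟩, hc⟩
    simp only [Prod.fst_add, Prod.snd_add, Prod.smul_mk, smul_eq_mul, Prod.mk_add_mk,
      Prod.mk.injEq] at hc ⊢
    have key : (m : ℝ) ^ 2 + m * n + n ^ 2 = 1 := by
      linear_combination hc - (((m : ℝ) ^ 2 + m * n) / 2 + (n : ℝ) ^ 2 / 8) * h2
        - (n : ℝ) ^ 2 / 8 * h6
    have kz : m ^ 2 + m * n + n ^ 2 = 1 := by exact_mod_cast key
    have hm1 : -1 ≤ m := by nlinarith [sq_nonneg (m + 2 * n), sq_nonneg (m + 1)]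
    have hm2 : m ≤ 1 := by nlinarith [sq_nonneg (m + 2 * n), sq_nonneg (m - 1)]
    have hn1 : -1 ≤ n := by nlinarith [sq_nonneg (2 * m + n), sq_nonneg (n + 1)]
    have hn2 : n ≤ 1 := by nlinarith [sq_nonneg (2 * m + n), sq_nonneg (n - 1)]
    interval_cases m <;> interval_cases n
    · exact absurd kz (by norm_num)
    · exact Or.inr (Or.inl ⟨by push_cast; ring, by push_cast; ring⟩)
    · exact Or.inr (Or.inr (Or.inl ⟨by push_cast; ring, by push_cast; ring⟩))
    · exact Or.inr (Or.inr (Or.inr (Or.inr (Or.inr ⟨by push_cast; ring, by push_cast; ring⟩))))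
    · exact absurd kz (by norm_num)
    · exact Or.inr (Or.inr (Or.inr (Or.inr (Or.inl ⟨by push_cast; ring, by push_cast; ring⟩))))
    · exact Or.inr (Or.inr (Or.inr (Or.inl ⟨by push_cast; ring, by push_cast; ring⟩)))
    · exact Or.inl ⟨by push_cast; ring, by push_cast; ring⟩
    · exact absurd kz (by norm_num)
  · rintro (rfl | rfl | rfl | rfl | rfl | rfl) <;> refine ⟨?_, ?_⟩
    · exact ⟨1, 0, by simp only [Prod.smul_mk, Prod.mk_add_mk, smul_eq_mul, Prod.mk.injEq]; push_cast; constructor <;> ring⟩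
    · exact c1
    · exact ⟨-1, 0, by simp only [Prod.smul_mk, Prod.mk_add_mk, smul_eq_mul, Prod.mk.injEq]; push_cast; constructor <;> ring⟩
    · exact c2
    · exact ⟨-1, 1, by simp only [Prod.smul_mk, Prod.mk_add_mk, smul_eq_mul, Prod.mk.injEq]; push_cast; constructor <;> ring⟩
    · exact c3
    · exact ⟨1, -1, by simp only [Prod.smul_mk, Prod.mk_add_mk, smul_eq_mul, Prod.mk.injEq]; push_cast; constructor <;> ring⟩
    · exact c4
    · exact ⟨0, 1, by simp only [Prod.smul_mk, Prod.mk_add_mk, smul_eq_mul, Prod.mk.injEq]; push_cast; constructor <;> ring⟩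
    · exact c5
    · exact ⟨0, -1, by simp only [Prod.smul_mk, Prod.mk_add_mk, smul_eq_mul, Prod.mk.injEq]; push_cast; constructor <;> ring⟩
    · exact c6
end

section
/- Let p > 1, let Λ ⊆ ℝ² be a critical lattice of D_p (an admissible lattice whose covolume equals Δ(D_p)), and let (P_x, P_y) ∈ Λ be a point with |P_x|^p + |P_y|^p = 1. If (u, v) ∈ ℝ² satisfies |P_x·v − P_y·u| = d(Λ) and |u|^p + |v|^p = 1, then (u, v) ∈ Λ. -/
/-!
Write the plane in the coordinates `(t, h) ↦ t • P + h • Q` of a basis `P, Q` of `Λ` chosen so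
that `(u, v)` lies on the line `h = 1`; such a `Q` exists because `P` is primitive in `Λ`
(otherwise `P / g` would be a nonzero lattice point inside `D_p`). The closed body meets this line
in a segment `[A, B]` whose interior lies in `D_p` by strict convexity, so `(u, v)` is an endpoint
and no integer lies in `(A, B)`. If `B - A < 1`, the row `h = 1` can be slid over the gap and
lowered slightly: the resulting lattice is still admissible but has smaller determinant,
contradicting criticality. Hence `B - A = 1`, both endpoints are integers, and `(u, v) ∈ Λ`.
-/

open scoped Pointwise

open Set

noncomputable def lpPow (p : ℝ) (v : ℝ × ℝ) : ℝ := |v.1| ^ p + |v.2| ^ p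

theorem mem_ballD_iff {p : ℝ} {v : ℝ × ℝ} : v ∈ ballD p ↔ lpPow p v < 1 := Iff.rfl

theorem mem_curveC_iff {p : ℝ} {v : ℝ × ℝ} : v ∈ curveC p ↔ lpPow p v = 1 := Iff.rfl

theorem strictConvexOn_abs_rpow {p : ℝ} (hp : 1 < p) :
    StrictConvexOn ℝ univ fun x : ℝ => |x| ^ p := by
  refine ⟨convex_univ, fun x _ y _ hxy a b ha hb hab => ?_⟩
  simp only [smul_eq_mul]
  rcases eq_or_ne |x| |y| with hxy' | hxy'
  · -- then `x = -y ≠ 0`, and the strictness comes from the cancellation in `a * x + b * y`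
    have hyx : x = -y := (abs_eq_abs.1 hxy').resolve_left hxy
    have hy : 0 < |y| := abs_pos.2 fun h => hxy (by simp [hyx, h])
    have hlt : |a * x + b * y| < |y| := by
      rw [hyx, show a * -y + b * y = (b - a) * y by ring, abs_mul]
      have : |b - a| < 1 := abs_lt.2 ⟨by linarith, by linarith⟩
      nlinarith
    calc |a * x + b * y| ^ p < |y| ^ p := Real.rpow_lt_rpow (abs_nonneg _) hlt (by linarith)
      _ = a * |x| ^ p + b * |y| ^ p := by rw [hxy']; linear_combination -(|y| ^ p) * hab
  · have htri : |a * x + b * y| ≤ a * |x| + b * |y| := by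
      simpa [abs_mul, abs_of_pos ha, abs_of_pos hb] using abs_add_le (a * x) (b * y)
    calc |a * x + b * y| ^ p ≤ (a * |x| + b * |y|) ^ p :=
          Real.rpow_le_rpow (abs_nonneg _) htri (by linarith)
      _ < a * |x| ^ p + b * |y| ^ p := by
          simpa using (strictConvexOn_rpow hp).2 (abs_nonneg x) (abs_nonneg y) hxy' ha hb hab

theorem strictConvexOn_lpPow {p : ℝ} (hp : 1 < p) : StrictConvexOn ℝ univ (lpPow p) := by
  have h := strictConvexOn_abs_rpow hp
  refine ⟨convex_univ, fun z _ w _ hzw a b ha hb hab => ?_⟩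
  simp only [lpPow, Prod.fst_add, Prod.snd_add, Prod.smul_fst, Prod.smul_snd, smul_eq_mul]
  have h1 := h.convexOn.2 (mem_univ z.1) (mem_univ w.1) ha.le hb.le hab
  have h2 := h.convexOn.2 (mem_univ z.2) (mem_univ w.2) ha.le hb.le hab
  simp only [smul_eq_mul] at h1 h2
  rcases eq_or_ne z.1 w.1 with h₁ | h₁
  · have h₂ : z.2 ≠ w.2 := fun h₂ => hzw (Prod.ext h₁ h₂)
    have := h.2 (mem_univ z.2) (mem_univ w.2) h₂ ha hb hab
    simp only [smul_eq_mul] at this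
    linarith
  · have := h.2 (mem_univ z.1) (mem_univ w.1) h₁ ha hb hab
    simp only [smul_eq_mul] at this
    linarith

theorem lpPow_smul (p t : ℝ) (v : ℝ × ℝ) : lpPow p (t • v) = |t| ^ p * lpPow p v := by
  simp only [lpPow, Prod.smul_fst, Prod.smul_snd, smul_eq_mul, abs_mul,
    Real.mul_rpow (abs_nonneg _) (abs_nonneg _), mul_add]

theorem lpPow_neg (p : ℝ) (v : ℝ × ℝ) : lpPow p (-v) = lpPow p v := by
  simp [lpPow]

theorem isCompact_setOf_lpPow_le_one {p : ℝ} (hp : 0 < p) : IsCompact {v | lpPow p v ≤ 1} := by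
  have hcont : Continuous (lpPow p) := by
    unfold lpPow
    exact ((continuous_fst.abs).rpow_const fun _ => Or.inr hp.le).add
      ((continuous_snd.abs).rpow_const fun _ => Or.inr hp.le)
  refine (isCompact_Icc (a := ((-1 : ℝ), (-1 : ℝ))) (b := (1, 1))).of_isClosed_subset
    (isClosed_le hcont continuous_const) fun v hv => ?_
  have hcoord : ∀ x y : ℝ, |x| ^ p + |y| ^ p ≤ 1 → -1 ≤ x ∧ x ≤ 1 := fun x y hxy =>
    abs_le.1 <| by
      by_contra! h
      linarith [Real.one_lt_rpow h hp, Real.rpow_nonneg (abs_nonneg y) p]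
  obtain ⟨h1, h1'⟩ := hcoord v.1 v.2 hv
  obtain ⟨h2, h2'⟩ := hcoord v.2 v.1 (by rw [add_comm]; exact hv)
  exact ⟨⟨h1, h2⟩, h1', h2'⟩

theorem StrictConvexOn.comp_linearMap_of_injective {E F : Type*} [AddCommGroup E] [Module ℝ E]
    [AddCommGroup F] [Module ℝ F] {f : F → ℝ} (hf : StrictConvexOn ℝ univ f) (g : E →ₗ[ℝ] F)
    (hg : Function.Injective g) : StrictConvexOn ℝ univ (f ∘ g) :=
  ⟨convex_univ, fun x _ y _ hxy a b ha hb hab => by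
    simpa only [Function.comp_apply, map_add, map_smul] using
      hf.2 (mem_univ (g x)) (mem_univ (g y)) (hg.ne hxy) ha hb hab⟩

/-- The lattice spanned by `(1, 0)` and `(s, h)` has no nonzero point in `{z | F z < 1}`. -/
def IsShearAdmissible (F : ℝ × ℝ → ℝ) (s h : ℝ) : Prop :=
  ∀ m n : ℤ, (m, n) ≠ (0, 0) → 1 ≤ F (m + n * s, n * h)

section Chord

variable {F : ℝ × ℝ → ℝ}

theorem exists_chord_endpoints (hK : IsCompact {z | F z ≤ 1}) {t : ℝ} (ht : F (t, 1) ≤ 1) :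
    ∃ A B : ℝ, F (A, 1) ≤ 1 ∧ F (B, 1) ≤ 1 ∧ ∀ x, F (x, 1) ≤ 1 → A ≤ x ∧ x ≤ B := by
  have hC : IsCompact ({z | F z ≤ 1} ∩ {z | z.2 = 1}) :=
    hK.inter_right (isClosed_eq continuous_snd continuous_const)
  have hne : ({z | F z ≤ 1} ∩ {z | z.2 = 1}).Nonempty := ⟨(t, 1), ht, rfl⟩
  obtain ⟨a, ⟨ha, ha1⟩, hmin⟩ := hC.exists_isMinOn hne continuous_fst.continuousOn
  obtain ⟨b, ⟨hb, hb1⟩, hmax⟩ := hC.exists_isMaxOn hne continuous_fst.continuousOn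
  refine ⟨a.1, b.1, ?_, ?_, fun x hx => ⟨hmin ⟨hx, rfl⟩, hmax ⟨hx, rfl⟩⟩⟩
  · rwa [show (a.1, (1 : ℝ)) = a from Prod.ext rfl ha1.symm]
  · rwa [show (b.1, (1 : ℝ)) = b from Prod.ext rfl hb1.symm]

variable {A B : ℝ}

theorem mul_two_sub_le_two (hconv : ConvexOn ℝ univ F) (heven : ∀ z, F (-z) = F z)
    (hP : F (1, 0) ≤ 1) (hA : ∀ x, F (x, 1) ≤ 1 → A ≤ x) (hB : ∀ x, F (x, 1) ≤ 1 → x ≤ B)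
    {x η : ℝ} (hη : 1 ≤ η) (hx : F (x, η) ≤ 1) : η * (2 - (B - A)) ≤ 2 := by
  have hη0 : 0 < η := by linarith
  have hsublevel := hconv.convex_le 1
  -- the chord through `(x, η)` and `(±1, 0)` meets height `1` at `x / η ± (1 - 1 / η)`
  have combo : ∀ e : ℝ, F (e, 0) ≤ 1 → F (x / η + (1 - 1 / η) * e, 1) ≤ 1 := fun e he => by
    have hpt : (x / η + (1 - 1 / η) * e, (1 : ℝ)) = (1 / η) • (x, η) + (1 - 1 / η) • (e, 0) :=
      Prod.ext (by simp; ring) (by simp; field_simp)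
    rw [hpt]
    exact (hsublevel ⟨mem_univ _, hx⟩ ⟨mem_univ _, he⟩ (by positivity)
      (by rw [sub_nonneg, div_le_one hη0]; exact hη) (add_sub_cancel _ _)).2
  have hm : F (-1, 0) ≤ 1 := by
    have := heven (1, 0)
    rw [Prod.neg_mk, neg_zero] at this
    rwa [this]
  have h1 := hB _ (combo 1 hP)
  have h2 := hA _ (combo (-1) hm)
  have key : η * (2 * (1 - 1 / η)) ≤ η * (B - A) := by gcongr; linarith
  have e : η * (2 * (1 - 1 / η)) = 2 * η - 2 := by field_simp
  linarith

theorem exists_lt_one_snd_le (hK : IsCompact {z | F z ≤ 1})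
    (hA : ∀ x, F (x, 1) ≤ 1 → A ≤ x) (hB : ∀ x, F (x, 1) ≤ 1 → x ≤ B) {δ : ℝ} (hδ : 0 < δ) :
    ∃ c < 1, ∀ z : ℝ × ℝ, F z ≤ 1 → z.2 ≤ 1 → z.1 ∉ Ioo (A - δ) (B + δ) → z.2 ≤ c := by
  set C := {z : ℝ × ℝ | F z ≤ 1} ∩ ({z | z.2 ≤ 1} ∩ (Prod.fst ⁻¹' Ioo (A - δ) (B + δ))ᶜ)
  have hC : IsCompact C := hK.inter_right <| (isClosed_le continuous_snd continuous_const).inter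
    (isOpen_Ioo.preimage continuous_fst).isClosed_compl
  rcases C.eq_empty_or_nonempty with hempty | hne
  · refine ⟨0, one_pos, fun z h1 h2 h3 => ?_⟩
    have : z ∈ C := ⟨h1, h2, h3⟩
    simp [hempty] at this
  obtain ⟨z₀, ⟨hz₀, hz₀1, hz₀δ⟩, hmax⟩ := hC.exists_isMaxOn hne continuous_snd.continuousOn
  refine ⟨z₀.2, lt_of_le_of_ne hz₀1 fun h => hz₀δ ?_, fun z h1 h2 h3 => hmax ⟨h1, h2, h3⟩⟩
  have hz : F (z₀.1, 1) ≤ 1 := by rwa [show (z₀.1, (1 : ℝ)) = z₀ from Prod.ext rfl h.symm]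
  exact ⟨by linarith [hA _ hz], by linarith [hB _ hz]⟩

theorem exists_isShearAdmissible_of_sub_lt_one (hconv : ConvexOn ℝ univ F)
    (hK : IsCompact {z | F z ≤ 1}) (heven : ∀ z, F (-z) = F z) (hP : F (1, 0) ≤ 1)
    (hadm : IsShearAdmissible F 0 1) (hA : ∀ x, F (x, 1) ≤ 1 → A ≤ x)
    (hB : ∀ x, F (x, 1) ≤ 1 → x ≤ B) (hAB : A ≤ B) (hlen : B - A < 1) :
    ∃ s h, 0 < h ∧ h < 1 ∧ IsShearAdmissible F s h := by
  set δ := (1 - (B - A)) / 2 with hδ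
  obtain ⟨c, hc1, hc⟩ := exists_lt_one_snd_le hK hA hB (by positivity : 0 < δ)
  -- `h > c` keeps row `1` off the body, `h * (2 - (B - A)) > 1` keeps rows `n ≥ 2` off it
  have hD : 1 < 2 - (B - A) := by linarith
  obtain ⟨h, hch, hh1⟩ := exists_between (max_lt hc1 (inv_lt_one_of_one_lt₀ hD))
  have hhD : 1 < h * (2 - (B - A)) := by
    have := mul_lt_mul_of_pos_right ((le_max_right _ _).trans_lt hch)
      (by linarith : 0 < 2 - (B - A))
    rwa [inv_mul_cancel₀ (by linarith)] at this
  have hh2 : 1 ≤ 2 * h := by nlinarith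
  have hpos : ∀ m n : ℤ, 0 < n → 1 ≤ F (m + n * (B + δ), n * h) := by
    intro m n hn
    by_contra! hlt
    obtain rfl | hn2 : n = 1 ∨ 2 ≤ n := by omega
    · refine absurd (hc _ hlt.le (by simpa using hh1.le) ?_)
        (by simpa using ((le_max_left _ _).trans_lt hch).not_ge)
      rintro ⟨h₁, h₂⟩
      obtain hm | hm : 0 ≤ m ∨ m ≤ -1 := by omega
      · have : (0 : ℝ) ≤ m := by exact_mod_cast hm
        simp only [Int.cast_one, one_mul] at h₂; linarith
      · have : (m : ℝ) ≤ -1 := by exact_mod_cast hm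
        simp only [Int.cast_one, one_mul] at h₁; linarith
    · have hn2' : (2 : ℝ) ≤ n := by exact_mod_cast hn2
      have hη : 2 * h ≤ n * h := by nlinarith
      have := mul_two_sub_le_two hconv heven hP hA hB (by linarith) hlt.le
      nlinarith
  refine ⟨B + δ, h, by linarith, hh1, fun m n hmn => ?_⟩
  rcases lt_trichotomy n 0 with hn | rfl | hn
  · have := hpos (-m) (-n) (by omega)
    rw [← heven] at this
    convert this using 2
    ext
    · simp; ring
    · simp
  · simpa using hadm m 0 hmn
  · exact hpos m n hn

theorem exists_int_eq_of_apply_eq_one (hconv : StrictConvexOn ℝ univ F)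
    (hK : IsCompact {z | F z ≤ 1}) (heven : ∀ z, F (-z) = F z) (hP : F (1, 0) ≤ 1)
    (hadm : IsShearAdmissible F 0 1) (hcrit : ∀ s h, 0 < h → h < 1 → ¬IsShearAdmissible F s h)
    {t : ℝ} (ht : F (t, 1) = 1) : ∃ k : ℤ, t = k := by
  obtain ⟨A, B, hA1, hB1, hAB⟩ := exists_chord_endpoints hK ht.le
  have hint : ∀ x, A < x → x < B → F (x, 1) < 1 := fun x h₁ h₂ => by
    have hseg : (x, (1 : ℝ)) ∈ openSegment ℝ (A, 1) (B, 1) := by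
      rw [← Prod.image_mk_openSegment_left, openSegment_eq_Ioo (h₁.trans h₂)]
      exact ⟨x, ⟨h₁, h₂⟩, rfl⟩
    exact (hconv.lt_on_openSegment (mem_univ _) (mem_univ _) (by simp; linarith) hseg).trans_le
      (max_le hA1 hB1)
  have hgap : ∀ m : ℤ, ¬(A < m ∧ m < B) := fun m ⟨h₁, h₂⟩ => by
    have := hadm m 1 (by simp)
    simp only [mul_zero, add_zero, Int.cast_one, mul_one] at this
    linarith [hint m h₁ h₂]
  have hlen : 1 ≤ B - A := by
    by_contra! hlen
    obtain ⟨s, h, h0, h1, hsh⟩ := exists_isShearAdmissible_of_sub_lt_one hconv.convexOn hK heven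
      hP hadm (fun x hx => (hAB x hx).1) (fun x hx => (hAB x hx).2) (hAB A hA1).2 hlen
    exact hcrit s h h0 h1 hsh
  have hfloor : ⌊A⌋ + 1 ≥ B := by
    by_contra! h
    exact hgap (⌊A⌋ + 1) ⟨by push_cast; exact Int.lt_floor_add_one A, by exact_mod_cast h⟩
  have hAk : A = ⌊A⌋ := le_antisymm (by linarith) (Int.floor_le A)
  have htAB : t = A ∨ t = B := by
    by_contra! hne
    obtain ⟨h₁, h₂⟩ := hAB t ht.le
    exact (hint t (lt_of_le_of_ne h₁ hne.1.symm) (lt_of_le_of_ne h₂ hne.2)).ne ht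
  rcases htAB with rfl | rfl
  · exact ⟨⌊t⌋, hAk⟩
  · exact ⟨⌊A⌋ + 1, by push_cast at hfloor ⊢; linarith⟩

end Chord

def coordMap (P Q : ℝ × ℝ) : ℝ × ℝ →ₗ[ℝ] ℝ × ℝ :=
  (LinearMap.toSpanSingleton ℝ _ P).coprod (LinearMap.toSpanSingleton ℝ _ Q)

section Coordinates

variable {a b P Q : ℝ × ℝ}

@[simp]
theorem coordMap_apply (P Q z : ℝ × ℝ) : coordMap P Q z = z.1 • P + z.2 • Q := rfl

theorem det2_coordMap_coordMap (a b z w : ℝ × ℝ) :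
    det2 (coordMap a b z) (coordMap a b w) = det2 z w * det2 a b := by
  simp only [det2, coordMap_apply, Prod.fst_add, Prod.snd_add, Prod.smul_fst, Prod.smul_snd,
    smul_eq_mul]
  ring

theorem det2_coordMap_left (P Q z : ℝ × ℝ) : det2 (coordMap P Q z) Q = z.1 * det2 P Q := by
  simp only [det2, coordMap_apply, Prod.fst_add, Prod.snd_add, Prod.smul_fst, Prod.smul_snd,
    smul_eq_mul]
  ring

theorem det2_coordMap_right (P Q z : ℝ × ℝ) : det2 P (coordMap P Q z) = z.2 * det2 P Q := by
  simp only [det2, coordMap_apply, Prod.fst_add, Prod.snd_add, Prod.smul_fst, Prod.smul_snd,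
    smul_eq_mul]
  ring

theorem coordMap_det2_div (h : det2 P Q ≠ 0) (w : ℝ × ℝ) :
    coordMap P Q (det2 w Q / det2 P Q, det2 P w / det2 P Q) = w := by
  unfold det2 at h ⊢
  ext <;> simp only [coordMap_apply, Prod.fst_add, Prod.snd_add, Prod.smul_fst,
    Prod.smul_snd, smul_eq_mul] <;>
    rw [div_mul_eq_mul_div, div_mul_eq_mul_div, ← add_div, div_eq_iff h] <;> ring

theorem coordMap_injective (h : det2 P Q ≠ 0) : Function.Injective (coordMap P Q) := by
  intro z w hzw
  have h₁ := det2_coordMap_left P Q z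
  have h₂ := det2_coordMap_right P Q z
  rw [hzw, det2_coordMap_left] at h₁
  rw [hzw, det2_coordMap_right] at h₂
  exact Prod.ext (mul_right_cancel₀ h h₁).symm (mul_right_cancel₀ h h₂).symm

theorem linearIndependent_iff_det2_ne_zero : LinearIndependent ℝ ![a, b] ↔ det2 a b ≠ 0 := by
  rw [LinearIndependent.pair_iff]
  refine ⟨fun hli hdet => ?_, fun h s t hst => ?_⟩
  · have h₁ := hli b.2 (-a.2) (by ext <;> simp [det2] at hdet ⊢ <;> linarith)
    have h₂ := hli b.1 (-a.1) (by ext <;> simp [det2] at hdet ⊢ <;> linarith)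
    have ha : a = 0 := Prod.ext (neg_eq_zero.1 h₂.2) (neg_eq_zero.1 h₁.2)
    simpa using hli 1 0 (by simp [ha])
  · simpa using coordMap_injective h (a₁ := (s, t)) (a₂ := 0) (by simpa using hst)

theorem coordMap_mem_latticeSet (hP : P ∈ latticeSet a b) (hQ : Q ∈ latticeSet a b) (m n : ℤ) :
    coordMap P Q (m, n) ∈ latticeSet a b := by
  obtain ⟨i, j, rfl⟩ := hP
  obtain ⟨k, l, rfl⟩ := hQ
  exact ⟨m * i + n * k, m * j + n * l, by ext <;> simp <;> ring⟩

end Coordinates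

section Lattice

variable {p : ℝ} {a b P Q : ℝ × ℝ}

theorem criticalDet_le {D : Set (ℝ × ℝ)} (hli : LinearIndependent ℝ ![a, b])
    (hadm : IsAdmissible D a b) : criticalDet D ≤ ENNReal.ofReal |det2 a b| :=
  sInf_le ⟨a, b, hli, hadm, rfl⟩

theorem exists_isCoprime_coordMap_eq (hp : 0 < p) (hadm : IsAdmissible (ballD p) a b)
    (hP : P ∈ latticeSet a b) (hPcurve : P ∈ curveC p) :
    ∃ m n : ℤ, IsCoprime m n ∧ coordMap a b (m, n) = P := by
  obtain ⟨m, n, hPmn⟩ := hP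
  replace hPmn : P = coordMap a b (m, n) := hPmn
  subst hPmn
  have hP1 : lpPow p (coordMap a b (m, n)) = 1 := hPcurve
  have hgcd : 0 < Int.gcd m n := by
    refine Nat.pos_of_ne_zero fun h => ?_
    obtain ⟨rfl, rfl⟩ := Int.gcd_eq_zero_iff.1 h
    simp [lpPow, Real.zero_rpow hp.ne'] at hP1
  obtain ⟨g, m', n', hg0, hcop, rfl, rfl⟩ := Int.exists_gcd_one' hgcd
  -- `P = g • P'` with `P' ∈ Λ \ {0}`, so admissibility forces `g = 1`
  have hPP' : coordMap a b ((m' * g : ℤ), (n' * g : ℤ)) = (g : ℝ) • coordMap a b (m', n') := by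
    ext <;> simp <;> ring
  have hP'1 : 1 ≤ lpPow p (coordMap a b (m', n')) := by
    by_contra! hlt
    have h0 : coordMap a b (m', n') = 0 := hadm ⟨⟨m', n', rfl⟩, hlt⟩
    rw [hPP', h0, smul_zero] at hP1
    simp [lpPow, Real.zero_rpow hp.ne'] at hP1
  have hg : g = 1 := by
    by_contra hg
    have hg2 : 1 < (g : ℝ) ^ p := Real.one_lt_rpow (by exact_mod_cast (by omega : 1 < g)) hp
    rw [hPP', lpPow_smul, Nat.abs_cast] at hP1
    nlinarith
  subst hg
  exact ⟨m', n', Int.isCoprime_iff_gcd_eq_one.2 hcop, by simp⟩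

theorem exists_mem_latticeSet_det2_eq_det2 (hp : 0 < p) (hadm : IsAdmissible (ballD p) a b)
    (hP : P ∈ latticeSet a b) (hPcurve : P ∈ curveC p) :
    ∃ Q ∈ latticeSet a b, det2 P Q = det2 a b := by
  obtain ⟨m, n, ⟨x, y, hxy⟩, rfl⟩ := exists_isCoprime_coordMap_eq hp hadm hP hPcurve
  refine ⟨coordMap a b ((-y : ℤ), (x : ℤ)), ⟨-y, x, rfl⟩, ?_⟩
  have hxy' : (x : ℝ) * m + y * n = 1 := by exact_mod_cast hxy
  rw [det2_coordMap_coordMap, det2]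
  push_cast
  linear_combination det2 a b * hxy'

theorem exists_mem_latticeSet_det2_eq (hp : 0 < p) (hadm : IsAdmissible (ballD p) a b)
    (hP : P ∈ latticeSet a b) (hPcurve : P ∈ curveC p) {w : ℝ × ℝ}
    (hw : |det2 P w| = |det2 a b|) : ∃ Q ∈ latticeSet a b, det2 P Q = det2 P w := by
  obtain ⟨Q, hQ, hPQ⟩ := exists_mem_latticeSet_det2_eq_det2 hp hadm hP hPcurve
  rcases abs_eq_abs.1 hw with h | h
  · exact ⟨Q, hQ, hPQ.trans h.symm⟩
  · obtain ⟨i, j, rfl⟩ := hQ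
    refine ⟨-coordMap a b (i, j), ⟨-i, -j, by ext <;> simp <;> ring⟩, ?_⟩
    rw [h, ← hPQ]
    simp only [det2, coordMap_apply, Prod.fst_neg, Prod.snd_neg]
    ring

theorem isShearAdmissible_zero_one (hadm : IsAdmissible (ballD p) a b) (hP : P ∈ latticeSet a b)
    (hQ : Q ∈ latticeSet a b) (h : det2 P Q ≠ 0) :
    IsShearAdmissible (lpPow p ∘ coordMap P Q) 0 1 := by
  intro m n hmn
  by_contra! hlt
  have h0 : coordMap P Q (m, n) = 0 :=
    hadm ⟨coordMap_mem_latticeSet hP hQ m n, mem_ballD_iff.2 (by simpa using hlt)⟩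
  exact hmn (by simpa using coordMap_injective h (h0.trans (map_zero _).symm))

theorem not_isShearAdmissible (hcrit : ENNReal.ofReal |det2 a b| = criticalDet (ballD p))
    (h : det2 P Q ≠ 0) (hPQ : |det2 P Q| = |det2 a b|) {s t : ℝ} (ht0 : 0 < t) (ht1 : t < 1) :
    ¬IsShearAdmissible (lpPow p ∘ coordMap P Q) s t := by
  intro hsh
  set b' := coordMap P Q (s, t)
  have hdet : det2 P b' = t * det2 P Q := det2_coordMap_right P Q (s, t)
  have hli : LinearIndependent ℝ ![P, b'] :=
    linearIndependent_iff_det2_ne_zero.2 (by rw [hdet]; exact mul_ne_zero ht0.ne' h)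
  have hadm' : IsAdmissible (ballD p) P b' := by
    rintro z ⟨⟨m, n, rfl⟩, hz⟩
    by_contra hz0
    have hmn : (m, n) ≠ (0, 0) := by rintro ⟨⟩; simp at hz0
    have hcoord : coordMap P Q (m + n * s, n * t) = (m : ℝ) • P + (n : ℝ) • b' := by
      ext <;> simp [b'] <;> ring
    exact (hsh m n hmn).not_gt (by simpa [hcoord] using mem_ballD_iff.1 hz)
  have hlt : ENNReal.ofReal |det2 P b'| < ENNReal.ofReal |det2 a b| := by
    rw [hdet, abs_mul, abs_of_pos ht0, ← hPQ]
    exact (ENNReal.ofReal_lt_ofReal_iff (abs_pos.2 h)).2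
      (mul_lt_of_lt_one_left (abs_pos.2 h) ht1)
  exact (criticalDet_le hli hadm').not_gt (hcrit ▸ hlt)

end Lattice

/-- let `Λ = ℤa + ℤb` be a critical lattice of `D_p` (admissible with
covolume `d(Λ) = |det2 a b| = Δ(D_p)`), and let `P ∈ Λ` lie on the Minkowski curve.
If `(u,v)` satisfies `|P.1·v - P.2·u| = d(Λ)` and `|u|^p + |v|^p = 1`,
then `(u,v) ∈ Λ`. -/
theorem stmt_10 (p : ℝ) (hp : 1 < p) (a b : ℝ × ℝ)
    (hab : LinearIndependent ℝ ![a, b])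
    (hadm : IsAdmissible (ballD p) a b)
    (hcrit : ENNReal.ofReal |det2 a b| = criticalDet (ballD p))
    (P : ℝ × ℝ) (hP : P ∈ latticeSet a b) (hPcurve : P ∈ curveC p)
    (u v : ℝ) (huv : |P.1 * v - P.2 * u| = |det2 a b|)
    (hcurve : (u, v) ∈ curveC p) :
    (u, v) ∈ latticeSet a b := by
  have hp0 : 0 < p := by linarith
  obtain ⟨Q, hQ, hPQ⟩ := exists_mem_latticeSet_det2_eq hp0 hadm hP hPcurve (w := (u, v)) huv
  have hPQ' : |det2 P Q| = |det2 a b| := hPQ ▸ huv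
  have hdet : det2 P Q ≠ 0 :=
    abs_ne_zero.1 (hPQ' ▸ abs_ne_zero.2 (linearIndependent_iff_det2_ne_zero.1 hab))
  have hw : coordMap P Q (det2 (u, v) Q / det2 P Q, 1) = (u, v) := by
    simpa [← hPQ, div_self hdet] using coordMap_det2_div hdet (u, v)
  obtain ⟨k, hk⟩ := exists_int_eq_of_apply_eq_one
    ((strictConvexOn_lpPow hp).comp_linearMap_of_injective _ (coordMap_injective hdet))
    ((LinearMap.isClosedEmbedding_of_injective (LinearMap.ker_eq_bot.2
      (coordMap_injective hdet))).isCompact_preimage (isCompact_setOf_lpPow_le_one hp0))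
    (fun z => by simp only [Function.comp_apply, map_neg, lpPow_neg])
    (by simpa using (mem_curveC_iff.1 hPcurve).le)
    (isShearAdmissible_zero_one hadm hP hQ hdet)
    (fun s t ht0 ht1 => not_isShearAdmissible hcrit hdet hPQ' ht0 ht1)
    (t := det2 (u, v) Q / det2 P Q) (by rw [Function.comp_apply, hw]; exact hcurve)
  rw [← hw, hk]
  exact_mod_cast coordMap_mem_latticeSet hP hQ k 1
end

section
/- Let a, b ∈ ℝ² be linearly independent. Then the area (two-dimensional Lebesgue measure) of the convex hull of the six points a, b, a + b, −a, −b, −(a + b) equals 3·|det(a, b)|, where det(a, b) = a₁b₂ − a₂b₁. -/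
open MeasureTheory

/-- The standard hexagon, as a region cut out by linear inequalities. -/
def hexStd : Set (ℝ × ℝ) := {p | |p.1| ≤ 1 ∧ |p.2| ≤ 1 ∧ |p.2 - p.1| ≤ 1}

lemma convex_hexStd : Convex ℝ hexStd := by
  intro x hx y hy s t hs ht hst
  obtain ⟨hx1, hx2, hx3⟩ := hx
  obtain ⟨hy1, hy2, hy3⟩ := hy
  have e1 : (s • x + t • y).1 = s * x.1 + t * y.1 := rfl
  have e2 : (s • x + t • y).2 = s * x.2 + t * y.2 := rfl
  refine ⟨?_, ?_, ?_⟩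
  · rw [e1]
    calc |s * x.1 + t * y.1| ≤ |s * x.1| + |t * y.1| := abs_add_le _ _
      _ = s * |x.1| + t * |y.1| := by rw [abs_mul, abs_mul, abs_of_nonneg hs, abs_of_nonneg ht]
      _ ≤ s * 1 + t * 1 := by gcongr
      _ = 1 := by linarith
  · rw [e2]
    calc |s * x.2 + t * y.2| ≤ |s * x.2| + |t * y.2| := abs_add_le _ _
      _ = s * |x.2| + t * |y.2| := by rw [abs_mul, abs_mul, abs_of_nonneg hs, abs_of_nonneg ht]
      _ ≤ s * 1 + t * 1 := by gcongr
      _ = 1 := by linarith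
  · rw [e1, e2]
    have : s * x.2 + t * y.2 - (s * x.1 + t * y.1) = s * (x.2 - x.1) + t * (y.2 - y.1) := by ring
    rw [this]
    calc |s * (x.2 - x.1) + t * (y.2 - y.1)| ≤ |s * (x.2 - x.1)| + |t * (y.2 - y.1)| := abs_add_le _ _
      _ = s * |x.2 - x.1| + t * |y.2 - y.1| := by
          rw [abs_mul, abs_mul, abs_of_nonneg hs, abs_of_nonneg ht]
      _ ≤ s * 1 + t * 1 := by gcongr
      _ = 1 := by linarith

lemma convex_comb3 {C : Set (ℝ × ℝ)} (hC : Convex ℝ C) {p q r : ℝ × ℝ}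
    (hp : p ∈ C) (hq : q ∈ C) (hr : r ∈ C) {s t u : ℝ}
    (hs : 0 ≤ s) (ht : 0 ≤ t) (hu : 0 ≤ u) (hsum : s + t + u = 1) :
    s • p + t • q + u • r ∈ C := by
  rcases eq_or_lt_of_le (by positivity : (0:ℝ) ≤ s + t) with h | h
  · have hs0 : s = 0 := by nlinarith
    have ht0 : t = 0 := by nlinarith
    have hu1 : u = 1 := by linarith
    simpa [hs0, ht0, hu1] using hr
  · have hmem : (s / (s + t)) • p + (t / (s + t)) • q ∈ C :=
      hC hp hq (by positivity) (by positivity) (by field_simp)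
    have h2 := hC hmem hr h.le hu (by linarith)
    have heq : (s + t) • ((s / (s + t)) • p + (t / (s + t)) • q) + u • r
        = s • p + t • q + u • r := by
      rw [smul_add, smul_smul, smul_smul, mul_div_cancel₀ _ h.ne', mul_div_cancel₀ _ h.ne']
    rwa [heq] at h2

lemma hexStd_hull :
    convexHull ℝ ({((1:ℝ), (0:ℝ)), (0, 1), (1, 1), (-1, 0), (0, -1), (-1, -1)} : Set (ℝ × ℝ))
      = hexStd := by
  apply le_antisymm
  · apply convexHull_min _ convex_hexStd
    intro p hp
    simp only [Set.mem_insert_iff, Set.mem_singleton_iff] at hp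
    rcases hp with h | h | h | h | h | h <;> subst h <;>
      constructor <;> norm_num [hexStd] <;> norm_num [abs_le]
  · intro p hp
    obtain ⟨h1, h2, h3⟩ := hp
    rw [abs_le] at h1 h2 h3
    set H := convexHull ℝ ({((1:ℝ), (0:ℝ)), (0, 1), (1, 1), (-1, 0), (0, -1), (-1, -1)} :
      Set (ℝ × ℝ)) with hH
    have hC : Convex ℝ H := convex_convexHull ℝ _
    have m1 : ((1:ℝ), (0:ℝ)) ∈ H := subset_convexHull ℝ _ (by simp)
    have m2 : ((0:ℝ), (1:ℝ)) ∈ H := subset_convexHull ℝ _ (by simp)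
    have m3 : ((1:ℝ), (1:ℝ)) ∈ H := subset_convexHull ℝ _ (by simp)
    have m4 : ((-1:ℝ), (0:ℝ)) ∈ H := subset_convexHull ℝ _ (by simp)
    have m5 : ((0:ℝ), (-1:ℝ)) ∈ H := subset_convexHull ℝ _ (by simp)
    have m6 : ((-1:ℝ), (-1:ℝ)) ∈ H := subset_convexHull ℝ _ (by simp)
    have m0 : ((0:ℝ), (0:ℝ)) ∈ H := by
      have := hC m1 m4 (by norm_num : (0:ℝ) ≤ 1/2) (by norm_num : (0:ℝ) ≤ 1/2) (by norm_num)
      simpa [Prod.ext_iff] using this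
    rcases le_or_gt 0 p.1 with hx0 | hx0
    · rcases le_or_gt 0 p.2 with hy0 | hy0
      · rcases le_or_gt p.1 p.2 with hle | hle
        · have := convex_comb3 hC m3 m2 m0 hx0 (by linarith) (by linarith)
            (by ring : p.1 + (p.2 - p.1) + (1 - p.2) = 1)
          have heq : p.1 • ((1:ℝ), (1:ℝ)) + (p.2 - p.1) • ((0:ℝ), (1:ℝ))
              + (1 - p.2) • ((0:ℝ), (0:ℝ)) = p := by
            refine Prod.ext ?_ ?_ <;> simp <;> ring
          rwa [heq] at this
        · have := convex_comb3 hC m3 m1 m0 hy0 (by linarith) (by linarith)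
            (by ring : p.2 + (p.1 - p.2) + (1 - p.1) = 1)
          have heq : p.2 • ((1:ℝ), (1:ℝ)) + (p.1 - p.2) • ((1:ℝ), (0:ℝ))
              + (1 - p.1) • ((0:ℝ), (0:ℝ)) = p := by
            refine Prod.ext ?_ ?_ <;> simp <;> ring
          rwa [heq] at this
      · have := convex_comb3 hC m1 m5 m0 hx0 (by linarith) (by linarith)
          (by ring : p.1 + (-p.2) + (1 - p.1 + p.2) = 1)
        have heq : p.1 • ((1:ℝ), (0:ℝ)) + (-p.2) • ((0:ℝ), (-1:ℝ))
            + (1 - p.1 + p.2) • ((0:ℝ), (0:ℝ)) = p := by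
          refine Prod.ext ?_ ?_ <;> simp <;> ring
        rwa [heq] at this
    · rcases le_or_gt 0 p.2 with hy0 | hy0
      · have := convex_comb3 hC m4 m2 m0 (by linarith) hy0 (by linarith)
          (by ring : (-p.1) + p.2 + (1 + p.1 - p.2) = 1)
        have heq : (-p.1) • ((-1:ℝ), (0:ℝ)) + p.2 • ((0:ℝ), (1:ℝ))
            + (1 + p.1 - p.2) • ((0:ℝ), (0:ℝ)) = p := by
          refine Prod.ext ?_ ?_ <;> simp <;> ring
        rwa [heq] at this
      · rcases le_or_gt p.1 p.2 with hle | hle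
        · have := convex_comb3 hC m6 m4 m0 (by linarith) (by linarith) (by linarith)
            (by ring : (-p.2) + (p.2 - p.1) + (1 + p.1) = 1)
          have heq : (-p.2) • ((-1:ℝ), (-1:ℝ)) + (p.2 - p.1) • ((-1:ℝ), (0:ℝ))
              + (1 + p.1) • ((0:ℝ), (0:ℝ)) = p := by
            refine Prod.ext ?_ ?_ <;> simp <;> ring
          rwa [heq] at this
        · have := convex_comb3 hC m6 m5 m0 (by linarith) (by linarith) (by linarith)
            (by ring : (-p.1) + (p.1 - p.2) + (1 + p.2) = 1)
          have heq : (-p.1) • ((-1:ℝ), (-1:ℝ)) + (p.1 - p.2) • ((0:ℝ), (-1:ℝ))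
              + (1 + p.2) • ((0:ℝ), (0:ℝ)) = p := by
            refine Prod.ext ?_ ?_ <;> simp <;> ring
          rwa [heq] at this

lemma measurableSet_hexStd : MeasurableSet hexStd := by
  have : hexStd = {p : ℝ × ℝ | |p.1| ≤ 1} ∩ ({p | |p.2| ≤ 1} ∩ {p | |p.2 - p.1| ≤ 1}) := by
    ext p; simp [hexStd, Set.mem_inter_iff, and_assoc]
  rw [this]
  refine (measurableSet_le (by fun_prop) measurable_const).inter
    ((measurableSet_le (by fun_prop) measurable_const).inter
      (measurableSet_le (by fun_prop) measurable_const))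

lemma hexStd_volume : volume hexStd = 3 := by
  have hslice : ∀ x : ℝ, (Prod.mk x ⁻¹' hexStd)
      = if |x| ≤ 1 then Set.Icc (max (-1) (x - 1)) (min 1 (x + 1)) else ∅ := by
    intro x
    ext y
    simp only [Set.mem_preimage, hexStd, Set.mem_setOf_eq, Set.mem_Icc]
    by_cases hx : |x| ≤ 1
    · simp only [hx, if_pos, true_and, Set.mem_Icc, max_le_iff, le_min_iff, abs_le]
      constructor
      · rintro ⟨⟨ha, hb⟩, hc, hd⟩; exact ⟨⟨ha, by linarith⟩, hb, by linarith⟩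
      · rintro ⟨⟨ha, hb⟩, hc, hd⟩; exact ⟨⟨ha, hc⟩, by linarith, by linarith⟩
    · simp [hx]
  have hlen : ∀ x : ℝ, |x| ≤ 1 → min 1 (x + 1) - max (-1) (x - 1) = 2 - |x| := by
    intro x hx
    rw [abs_le] at hx
    rcases le_or_gt 0 x with h | h
    · rw [abs_of_nonneg h, min_eq_left (by linarith), max_eq_right (by linarith)]; ring
    · rw [abs_of_neg h, min_eq_right (by linarith), max_eq_left (by linarith)]; ring
  rw [Measure.volume_eq_prod, Measure.prod_apply measurableSet_hexStd]
  have hpt : ∀ x : ℝ, volume (Prod.mk x ⁻¹' hexStd)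
      = Set.indicator (Set.Icc (-1 : ℝ) 1) (fun x => ENNReal.ofReal (2 - |x|)) x := by
    intro x
    rw [hslice x]
    by_cases hx : |x| ≤ 1
    · rw [if_pos hx, Real.volume_Icc, hlen x hx,
        Set.indicator_of_mem (by rwa [Set.mem_Icc, ← abs_le])]
    · rw [if_neg hx, Set.indicator_of_notMem (by rwa [Set.mem_Icc, ← abs_le])]
      simp
  simp_rw [hpt]
  rw [lintegral_indicator measurableSet_Icc]
  have hnn : (0 : ℝ → ℝ) ≤ᵐ[volume.restrict (Set.Icc (-1 : ℝ) 1)] fun x => 2 - |x| := by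
    rw [Filter.EventuallyLE, ae_restrict_iff' measurableSet_Icc]
    refine ae_of_all _ fun x hx => ?_
    rw [Set.mem_Icc, ← abs_le] at hx
    simp only [Pi.zero_apply]
    linarith
  have hint : IntegrableOn (fun x : ℝ => 2 - |x|) (Set.Icc (-1 : ℝ) 1) volume := by
    exact (continuous_const.sub continuous_abs).integrableOn_Icc
  rw [← ofReal_integral_eq_lintegral_ofReal hint hnn]
  have : ∫ x in Set.Icc (-1 : ℝ) 1, (2 - |x|) = 3 := by
    rw [MeasureTheory.integral_Icc_eq_integral_Ioc,
      ← intervalIntegral.integral_of_le (by norm_num : (-1 : ℝ) ≤ 1)]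
    have hsplit := intervalIntegral.integral_add_adjacent_intervals
      (μ := volume) (a := (-1:ℝ)) (b := 0) (c := 1) (f := fun x => 2 - |x|)
      ((continuous_const.sub continuous_abs).intervalIntegrable _ _)
      ((continuous_const.sub continuous_abs).intervalIntegrable _ _)
    rw [← hsplit]
    have e1 : ∫ x in (-1:ℝ)..0, (2 - |x|) = ∫ x in (-1:ℝ)..0, (2 + x) := by
      apply intervalIntegral.integral_congr
      intro x hx
      rw [Set.uIcc_of_le (by norm_num : (-1:ℝ) ≤ 0), Set.mem_Icc] at hx
      show 2 - |x| = 2 + x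
      rw [abs_of_nonpos hx.2]; ring
    have e2 : ∫ x in (0:ℝ)..1, (2 - |x|) = ∫ x in (0:ℝ)..1, (2 - x) := by
      apply intervalIntegral.integral_congr
      intro x hx
      rw [Set.uIcc_of_le (by norm_num : (0:ℝ) ≤ 1), Set.mem_Icc] at hx
      show 2 - |x| = 2 - x
      rw [abs_of_nonneg hx.1]
    rw [e1, e2]
    have i1 : ∫ x in (-1:ℝ)..0, (2 + x) = 3/2 := by
      rw [intervalIntegral.integral_add intervalIntegrable_const
        (intervalIntegral.intervalIntegrable_id), intervalIntegral.integral_const,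
        integral_id]
      norm_num
    have i2 : ∫ x in (0:ℝ)..1, (2 - x) = 3/2 := by
      rw [intervalIntegral.integral_sub intervalIntegrable_const
        (intervalIntegral.intervalIntegrable_id), intervalIntegral.integral_const,
        integral_id]
      norm_num
    rw [i1, i2]; norm_num
  rw [this]
  norm_num

/-- for linearly independent `a, b ∈ ℝ²`, the area of the convex hull of
the six points `a, b, a+b, -a, -b, -(a+b)` equals `3·|det(a,b)|`. -/
theorem stmt_15 (a b : ℝ × ℝ) (hab : LinearIndependent ℝ ![a, b]) :
    volume (convexHull ℝ ({a, b, a + b, -a, -b, -(a + b)} : Set (ℝ × ℝ))) =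
      ENNReal.ofReal (3 * |det2 a b|) := by
  set f : (ℝ × ℝ) →ₗ[ℝ] (ℝ × ℝ) :=
    Matrix.toLin (Module.Basis.finTwoProd ℝ) (Module.Basis.finTwoProd ℝ) !![a.1, b.1; a.2, b.2] with hfdef
  have hf : ∀ p : ℝ × ℝ, f p = (a.1 * p.1 + b.1 * p.2, a.2 * p.1 + b.2 * p.2) := fun p =>
    Matrix.toLin_finTwoProd_apply a.1 b.1 a.2 b.2 p
  have himg : f '' ({((1:ℝ), (0:ℝ)), (0, 1), (1, 1), (-1, 0), (0, -1), (-1, -1)} : Set (ℝ × ℝ))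
      = {a, b, a + b, -a, -b, -(a + b)} := by
    have e1 : f (1, 0) = a := by rw [hf]; simp [Prod.ext_iff]
    have e2 : f (0, 1) = b := by rw [hf]; simp [Prod.ext_iff]
    have e3 : f (1, 1) = a + b := by rw [hf]; simp [Prod.ext_iff]
    have e4 : f (-1, 0) = -a := by rw [hf]; simp [Prod.ext_iff]
    have e5 : f (0, -1) = -b := by rw [hf]; simp [Prod.ext_iff]
    have e6 : f (-1, -1) = -(a + b) := by rw [hf]; simp [Prod.ext_iff]; constructor <;> ring
    rw [Set.image_insert_eq, Set.image_insert_eq, Set.image_insert_eq, Set.image_insert_eq,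
      Set.image_insert_eq, Set.image_singleton, e1, e2, e3, e4, e5, e6]
  have hdet : LinearMap.det f = det2 a b := by
    rw [hfdef, LinearMap.det_toLin, Matrix.det_fin_two_of, det2]
    ring
  rw [← himg, ← LinearMap.image_convexHull, hexStd_hull,
    Measure.addHaar_image_linearMap, hdet, hexStd_volume]
  rw [show (3 : ENNReal) = ENNReal.ofReal 3 by norm_num, ← ENNReal.ofReal_mul (abs_nonneg _),
    mul_comm]
end
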